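/- Let u be a positive solution of the perturbed Kirchhoff equation −(ε²a + εb∫_{ℝ³}|∇u|²)Δu + V(x)u = u^p in ℝ³, and let Ω ⊂ ℝ³ be a bounded smooth domain with unit outward normal ν = (ν₁, ν₂, ν₃). Then for each i = 1,2,3, the local Pohozaev identity holds: ∫_Ω (∂V/∂x_i) u² = (ε²a + εb∫_{ℝ³}|∇u|²) ∫_{∂Ω} (|∇u|²ν_i − 2 (∂u/∂ν)(∂u/∂x_i)) + ∫_{∂Ω} V u² ν_i − (2/(p+1)) ∫_{∂Ω} u^{p+1} ν_i. -/

import Mathlib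

open MeasureTheory Filter Asymptotics Metric
open scoped Topology ENNReal

noncomputable section

abbrev E3 : Type := EuclideanSpace ℝ (Fin 3)

/-- The Laplacian of `u`, as the sum of second partial derivatives. -/
noncomputable def lap (u : E3 → ℝ) (x : E3) : ℝ :=
  ∑ i : Fin 3, iteratedFDeriv ℝ 2 u x (fun _ => EuclideanSpace.single i (1 : ℝ))

/-- `∫ ∇u · ∇v`. -/
noncomputable def gradIP (u v : E3 → ℝ) : ℝ :=
  ∫ x : E3, (inner ℝ (gradient u x) (gradient v x) : ℝ)

/-- `∫ |∇u|²`. -/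
noncomputable def gradSq (u : E3 → ℝ) : ℝ :=
  ∫ x : E3, ‖gradient u x‖ ^ 2

/-- Membership in `H¹(ℝ³)`: the function and its gradient are in `L²`. -/
def InH1 (u : E3 → ℝ) : Prop :=
  MemLp u 2 (volume : Measure E3) ∧ MemLp (fun x => gradient u x) 2 (volume : Measure E3)

/-- Radial function. -/
def IsRadial (u : E3 → ℝ) : Prop := ∀ x y : E3, ‖x‖ = ‖y‖ → u x = u y

/-- `u` is a positive `H¹` solution of `-(a + b ∫|∇u|²) Δu + u = u^p` in `ℝ³`. -/
def SolvesKirchhoff (a b p : ℝ) (u : E3 → ℝ) : Prop :=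
  ContDiff ℝ 2 u ∧ InH1 u ∧ (∀ x, 0 < u x) ∧
    ∀ x, -(a + b * gradSq u) * lap u x + u x = u x ^ p

/-- `Q` is a positive `H¹` solution of `-ΔQ + Q = Q^p` in `ℝ³`. -/
def SolvesNLS (p : ℝ) (Q : E3 → ℝ) : Prop :=
  ContDiff ℝ 2 Q ∧ InH1 Q ∧ (∀ x, 0 < Q x) ∧
    ∀ x, -lap Q x + Q x = Q x ^ p

/-- Assumption (V1): `V` is bounded, continuous, with positive infimum. -/
def V1cond (V : E3 → ℝ) : Prop :=
  Continuous V ∧ (∃ M, ∀ x, |V x| ≤ M) ∧ ∃ c > (0 : ℝ), ∀ x, c ≤ V x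

/-- Assumption (V2), normalized with `x₀ = 0`, `r₀ = 10`, `V(x₀) = 1`:
`0` is a strict local minimum point and `V` is `α`-Hölder continuous on `B̄₁₀(0)`. -/
def V2cond (V : E3 → ℝ) (α : ℝ) : Prop :=
  0 < α ∧ α < 1 ∧ V 0 = 1 ∧ (∀ x : E3, 0 < ‖x‖ → ‖x‖ < 10 → V 0 < V x) ∧
    ∃ C, ∀ x ∈ Metric.closedBall (0 : E3) 10, ∀ y ∈ Metric.closedBall (0 : E3) 10,
      |V x - V y| ≤ C * ‖x - y‖ ^ α

/-- Assumption (V3), normalized with `x₀ = 0`: `V ∈ C¹` with the local expansions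
`V(x) = V(0) + ∑ cᵢ|xᵢ|^m + O(|x|^(m+1))` and
`∂V/∂xᵢ = m cᵢ |xᵢ|^(m-2) xᵢ + O(|x|^m)` on `B_δ(0)`. -/
def V3cond (V : E3 → ℝ) (m δ : ℝ) (c : Fin 3 → ℝ) : Prop :=
  ContDiff ℝ 1 V ∧ 1 < m ∧ 0 < δ ∧ (∀ i, c i ≠ 0) ∧
    ∃ C, ∀ x ∈ Metric.ball (0 : E3) δ,
      |V x - V 0 - ∑ i : Fin 3, c i * |x i| ^ m| ≤ C * ‖x‖ ^ (m + 1) ∧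
      ∀ i : Fin 3,
        |fderiv ℝ V x (EuclideanSpace.single i 1) - m * c i * |x i| ^ (m - 2) * x i|
          ≤ C * ‖x‖ ^ m

/-- The inner product `⟨u,v⟩_ε = ∫ (ε²a ∇u·∇v + V u v)`. -/
noncomputable def innerEps (a : ℝ) (V : E3 → ℝ) (ε : ℝ) (u v : E3 → ℝ) : ℝ :=
  ∫ x : E3, (ε ^ 2 * a * (inner ℝ (gradient u x) (gradient v x) : ℝ) + V x * u x * v x)

/-- The norm `‖u‖_ε`. -/
noncomputable def normEps (a : ℝ) (V : E3 → ℝ) (ε : ℝ) (u : E3 → ℝ) : ℝ :=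
  Real.sqrt (innerEps a V ε u u)

/-- `u` is a positive solution of the perturbed Kirchhoff problem
`-(ε²a + εb ∫|∇u|²) Δu + V u = u^p` in `ℝ³`. -/
def SolvesPerturbed (a b p ε : ℝ) (V : E3 → ℝ) (u : E3 → ℝ) : Prop :=
  ContDiff ℝ 2 u ∧ InH1 u ∧ (∀ x, 0 < u x) ∧
    ∀ x, -(ε ^ 2 * a + ε * b * gradSq u) * lap u x + V x * u x = u x ^ p

/-- `U_{ε,y}(x) = U((x - y)/ε)`. -/
noncomputable def Uey (U : E3 → ℝ) (ε : ℝ) (y : E3) : E3 → ℝ :=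
  fun x => U (ε⁻¹ • (x - y))

/-- The divergence of a vector field `F : ℝ³ → ℝ³`. -/
noncomputable def divg (F : E3 → E3) (x : E3) : ℝ :=
  ∑ i : Fin 3, fderiv ℝ (fun y => F y i) x (EuclideanSpace.single i 1)


/-! Multiply the equation by `2 ∂ᵢu` and write every term as a divergence:
`-2 ∂ᵢu Δu = div (|∇u|² eᵢ - 2 ∂ᵢu ∇u)` (this uses the symmetry of the Hessian),
`2 V u ∂ᵢu = div (V u² eᵢ) - ∂ᵢV u²` and `2 uᵖ ∂ᵢu = (2 / (p + 1)) div (uᵖ⁺¹ eᵢ)`.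
Integrating over `Ω` and applying the divergence theorem to the three fields gives the identity. -/

open EuclideanSpace

theorem EuclideanSpace.gradient_apply {ι : Type*} [Fintype ι] [DecidableEq ι]
    (f : EuclideanSpace ℝ ι → ℝ) (x : EuclideanSpace ℝ ι) (i : ι) :
    gradient f x i = fderiv ℝ f x (single i 1) := by
  have h := inner_gradient_left (f := f) (x := x) (y := single i (1 : ℝ))
  rw [inner_single_right] at h
  simpa using h

theorem inner_smul_single_left {ι : Type*} [Fintype ι] [DecidableEq ι] (c : ℝ) (i : ι)
    (v : EuclideanSpace ℝ ι) :
    inner ℝ (c • single i (1 : ℝ)) v = c * v i := by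
  simp [real_inner_smul_left, inner_single_left]

theorem fderiv_fderiv_apply {E G : Type*} [NormedAddCommGroup E] [NormedSpace ℝ E]
    [NormedAddCommGroup G] [NormedSpace ℝ G] {u : E → G} (hu : ContDiff ℝ 2 u) (x v w : E) :
    fderiv ℝ (fun y => fderiv ℝ u y v) x w = fderiv ℝ (fderiv ℝ u) x w v := by
  rw [fderiv_clm_apply ((hu.fderiv_right (m := 1) le_rfl).differentiable one_ne_zero x)
    (differentiableAt_const v)]
  simp

section Gradient

variable {F : Type*} [NormedAddCommGroup F] [InnerProductSpace ℝ F] [CompleteSpace F]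
  {u : F → ℝ}

theorem ContDiff.gradient {m n : WithTop ℕ∞} (hu : ContDiff ℝ n u) (hmn : m + 1 ≤ n) :
    ContDiff ℝ m (gradient u) :=
  (InnerProductSpace.toDual ℝ F).symm.contDiff.comp (hu.fderiv_right hmn)

theorem hasFDerivAt_gradient (hu : ContDiff ℝ 2 u) (x : F) :
    HasFDerivAt (gradient u)
      ((InnerProductSpace.toDual ℝ F).symm.toContinuousLinearEquiv.toContinuousLinearMap.comp
        (fderiv ℝ (fderiv ℝ u) x)) x :=
  (InnerProductSpace.toDual ℝ F).symm.hasFDerivAt.comp x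
    ((hu.fderiv_right (m := 1) le_rfl).differentiable one_ne_zero x).hasFDerivAt

theorem fderiv_norm_sq_gradient (hu : ContDiff ℝ 2 u) (x v : F) :
    fderiv ℝ (fun y => ‖gradient u y‖ ^ 2) x v
      = 2 * fderiv ℝ (fderiv ℝ u) x v (gradient u x) := by
  rw [(hasFDerivAt_gradient hu x).norm_sq.fderiv]
  simp only [smul_apply, ContinuousLinearMap.comp_apply, ContinuousLinearEquiv.coe_coe,
    LinearIsometryEquiv.coe_toContinuousLinearEquiv, coe_innerSL_apply, nsmul_eq_mul,
    Nat.cast_ofNat]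
  rw [real_inner_comm, InnerProductSpace.toDual_symm_apply]

end Gradient

theorem lap_eq_sum_fderiv_fderiv (u : E3 → ℝ) (x : E3) :
    lap u x = ∑ j, fderiv ℝ (fderiv ℝ u) x (single j 1) (single j 1) := by
  simp only [lap, iteratedFDeriv_two_apply]

theorem continuous_divg {F : E3 → E3} (hF : ContDiff ℝ 1 F) : Continuous (divg F) := by
  have := fun j => (contDiff_euclidean.1 hF j).continuous_fderiv one_ne_zero
  unfold divg
  fun_prop

theorem integrableOn_divg {F : E3 → E3} (hF : ContDiff ℝ 1 F) {Ω : Set E3}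
    (hΩ : Bornology.IsBounded Ω) : IntegrableOn (divg F) Ω :=
  ((continuous_divg hF).continuousOn.integrableOn_compact hΩ.isCompact_closure).mono_set
    subset_closure

theorem divg_smul_single (f : E3 → ℝ) (i : Fin 3) (x : E3) :
    divg (fun y => f y • single i 1) x = fderiv ℝ f x (single i 1) := by
  rw [divg, Finset.sum_eq_single i]
  · simp
  · intro j _ hji
    simp [hji]
  · simp

theorem divg_sub {F G : E3 → E3} {x : E3} (hF : DifferentiableAt ℝ F x)
    (hG : DifferentiableAt ℝ G x) : divg (fun y => F y - G y) x = divg F x - divg G x := by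
  simp only [divg, ← Finset.sum_sub_distrib, PiLp.sub_apply]
  refine Finset.sum_congr rfl fun j _ => ?_
  rw [fderiv_fun_sub (differentiableAt_euclidean.1 hF j) (differentiableAt_euclidean.1 hG j)]
  rfl

theorem divg_smul {φ : E3 → ℝ} {G : E3 → E3} {x : E3} (hφ : DifferentiableAt ℝ φ x)
    (hG : DifferentiableAt ℝ G x) :
    divg (fun y => φ y • G y) x = fderiv ℝ φ x (G x) + φ x * divg G x := by
  have hGx : G x = ∑ j, G x j • single j 1 := by
    simpa using ((basisFun (Fin 3) ℝ).sum_repr (G x)).symm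
  have hcomp (j : Fin 3) : fderiv ℝ (fun y => φ y * G y j) x (single j 1)
      = G x j * fderiv ℝ φ x (single j 1)
        + φ x * fderiv ℝ (fun y => G y j) x (single j 1) := by
    rw [fderiv_fun_mul hφ (differentiableAt_euclidean.1 hG j)]
    simp only [add_apply, smul_apply, smul_eq_mul]
    ring
  simp only [divg, PiLp.smul_apply, smul_eq_mul, hcomp, Finset.sum_add_distrib, Finset.mul_sum]
  congr 1
  conv_rhs => rw [hGx]
  simp [map_sum]

theorem divg_gradient {u : E3 → ℝ} (hu : ContDiff ℝ 2 u) (x : E3) :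
    divg (gradient u) x = lap u x := by
  simp only [divg, gradient_apply, fderiv_fderiv_apply hu, lap_eq_sum_fderiv_fderiv]

section PohozaevField

def pohozaevField (u : E3 → ℝ) (i : Fin 3) (x : E3) : E3 :=
  ‖gradient u x‖ ^ 2 • single i 1 - (2 * gradient u x i) • gradient u x

variable {u : E3 → ℝ} (i : Fin 3)

theorem inner_pohozaevField (x v : E3) :
    inner ℝ (pohozaevField u i x) v
      = ‖gradient u x‖ ^ 2 * v i - 2 * inner ℝ (gradient u x) v * gradient u x i := by
  simp only [pohozaevField, inner_sub_left, real_inner_smul_left, inner_single_left, map_one,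
    one_mul]
  ring

theorem contDiff_pohozaevField (hu : ContDiff ℝ 2 u) : ContDiff ℝ 1 (pohozaevField u i) := by
  have hg : ContDiff ℝ 1 (gradient u) := hu.gradient le_rfl
  exact ((hg.norm_sq ℝ).smul contDiff_const).sub
    ((contDiff_const.mul (contDiff_euclidean.1 hg i)).smul hg)

theorem divg_pohozaevField (hu : ContDiff ℝ 2 u) (x : E3) :
    divg (pohozaevField u i) x = -2 * gradient u x i * lap u x := by
  set H := fderiv ℝ (fderiv ℝ u) x
  have hg : Differentiable ℝ (gradient u) := (hu.gradient le_rfl).differentiable one_ne_zero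
  have hgi : Differentiable ℝ (fun y => 2 * gradient u y i) :=
    (differentiable_euclidean.1 hg i).const_mul 2
  have hpartial : fderiv ℝ (fun y => 2 * gradient u y i) x (gradient u x)
      = 2 * H (gradient u x) (single i 1) := by
    rw [fderiv_const_mul (differentiable_euclidean.1 hg i x)]
    simp only [gradient_apply, smul_apply, smul_eq_mul, fderiv_fderiv_apply hu, H]
  have hsymm : H (single i 1) (gradient u x) = H (gradient u x) (single i 1) :=
    hu.contDiffAt.isSymmSndFDerivAt (by simp) _ _
  unfold pohozaevField
  rw [divg_sub (G := fun y => (2 * gradient u y i) • gradient u y)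
      (((hg x).norm_sq ℝ).smul_const _) ((hgi x).smul (hg x)), divg_smul_single,
    divg_smul (hgi x) (hg x), divg_gradient hu, fderiv_norm_sq_gradient hu, hpartial, hsymm]
  ring

end PohozaevField

theorem pohozaev_pointwise {k p : ℝ} {V u : E3 → ℝ} (hV : ContDiff ℝ 1 V)
    (hu : ContDiff ℝ 2 u) (hp : p + 1 ≠ 0) (i : Fin 3) {x : E3} (hux : 0 < u x)
    (hPDE : -k * lap u x + V x * u x = u x ^ p) :
    fderiv ℝ V x (single i 1) * u x ^ 2
      = k * divg (pohozaevField u i) x + divg (fun y => (V y * u y ^ 2) • single i 1) x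
        - 2 / (p + 1) * divg (fun y => u y ^ (p + 1) • single i 1) x := by
  have hDu := ((hu.of_le one_le_two).differentiable one_ne_zero x).hasFDerivAt
  have hDV := (hV.differentiable one_ne_zero x).hasFDerivAt
  have hdiv₂ : divg (fun y => (V y * u y ^ 2) • single i 1) x
      = fderiv ℝ V x (single i 1) * u x ^ 2 + 2 * V x * u x * gradient u x i := by
    rw [divg_smul_single, (hDV.fun_mul (hDu.pow 2)).fderiv, gradient_apply]
    simp only [Nat.add_one_sub_one, pow_one, nsmul_eq_mul, Nat.cast_ofNat, add_apply, smul_apply,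
      smul_eq_mul]
    ring
  have hdiv₃ : divg (fun y => u y ^ (p + 1) • single i 1) x
      = (p + 1) * u x ^ p * gradient u x i := by
    rw [divg_smul_single, (hDu.rpow_const (p := p + 1) (Or.inl hux.ne')).fderiv, gradient_apply]
    simp
  rw [divg_pohozaevField i hu, hdiv₂, hdiv₃]
  field_simp
  linear_combination (-2 * gradient u x i) * hPDE

theorem statement16_general (a b p ε : ℝ) (hp1 : 1 < p)
    (V : E3 → ℝ) (hVC1 : ContDiff ℝ 1 V)
    (u : E3 → ℝ) (hu : SolvesPerturbed a b p ε V u)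
    (Ω : Set E3) (hΩb : Bornology.IsBounded Ω)
    -- `σ` is the surface measure on `∂Ω` and `ν` the unit outward normal, characterized
    -- by the divergence theorem on the bounded smooth domain `Ω`
    (σ : Measure E3) (ν : E3 → E3)
    (hdiv : ∀ F : E3 → E3, ContDiff ℝ 1 F →
      (∫ x in Ω, divg F x) = ∫ x, (inner ℝ (F x) (ν x) : ℝ) ∂σ) :
    ∀ i : Fin 3,
      (∫ x in Ω, fderiv ℝ V x (EuclideanSpace.single i 1) * u x ^ 2)
        = (ε ^ 2 * a + ε * b * gradSq u)
            * (∫ x, (‖gradient u x‖ ^ 2 * ν x i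
                - 2 * (inner ℝ (gradient u x) (ν x) : ℝ) * gradient u x i) ∂σ)
          + (∫ x, V x * u x ^ 2 * ν x i ∂σ)
          - (2 / (p + 1)) * ∫ x, u x ^ (p + 1) * ν x i ∂σ := by
  intro i
  obtain ⟨hu2, -, hupos, hPDE⟩ := hu
  set k := ε ^ 2 * a + ε * b * gradSq u
  set F₂ : E3 → E3 := fun x => (V x * u x ^ 2) • single i 1
  set F₃ : E3 → E3 := fun x => u x ^ (p + 1) • single i 1
  have hu1 : ContDiff ℝ 1 u := hu2.of_le one_le_two
  have hP := contDiff_pohozaevField i hu2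
  have hF₂ : ContDiff ℝ 1 F₂ := (hVC1.mul (hu1.pow 2)).smul contDiff_const
  have hF₃ : ContDiff ℝ 1 F₃ := contDiff_iff_contDiffAt.2 fun x =>
    (hu1.contDiffAt.rpow_const_of_ne (hupos x).ne').smul contDiffAt_const
  have hint {F : E3 → E3} (hF : ContDiff ℝ 1 F) : IntegrableOn (divg F) Ω :=
    integrableOn_divg hF hΩb
  calc _ = ∫ x in Ω, k * divg (pohozaevField u i) x + divg F₂ x - 2 / (p + 1) * divg F₃ x :=
        integral_congr_ae <| ae_of_all _ fun x =>
          pohozaev_pointwise hVC1 hu2 (by linarith) i (hupos x) (hPDE x)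
    _ = k * (∫ x in Ω, divg (pohozaevField u i) x) + (∫ x in Ω, divg F₂ x)
          - 2 / (p + 1) * ∫ x in Ω, divg F₃ x := by
      rw [integral_sub (f := fun x => k * divg (pohozaevField u i) x + divg F₂ x)
        (((hint hP).const_mul k).add (hint hF₂)) ((hint hF₃).const_mul _),
        integral_add ((hint hP).const_mul k) (hint hF₂), integral_const_mul, integral_const_mul]
    _ = _ := by
      simp only [hdiv _ hP, hdiv _ hF₂, hdiv _ hF₃, inner_pohozaevField, F₂, F₃,
        inner_smul_single_left]

theorem statement16 (a b p ε : ℝ) (ha : 0 < a) (hb : 0 < b) (hp1 : 1 < p) (hp5 : p < 5)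
    (hε : 0 < ε)
    (V : E3 → ℝ) (hVC1 : ContDiff ℝ 1 V) (hVbdd : ∃ M, ∀ x, |V x| ≤ M)
    (u : E3 → ℝ) (hu : SolvesPerturbed a b p ε V u)
    (Ω : Set E3) (hΩo : IsOpen Ω) (hΩb : Bornology.IsBounded Ω)
    -- `σ` is the surface measure on `∂Ω` and `ν` the unit outward normal, characterized
    -- by the divergence theorem on the bounded smooth domain `Ω`
    (σ : Measure E3) (ν : E3 → E3)
    (hσ : ∀ s : Set E3, σ s = σ (s ∩ frontier Ω))
    (hν : ∀ x ∈ frontier Ω, ‖ν x‖ = 1)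
    (hdiv : ∀ F : E3 → E3, ContDiff ℝ 1 F →
      (∫ x in Ω, divg F x) = ∫ x, (inner ℝ (F x) (ν x) : ℝ) ∂σ) :
    ∀ i : Fin 3,
      (∫ x in Ω, fderiv ℝ V x (EuclideanSpace.single i 1) * u x ^ 2)
        = (ε ^ 2 * a + ε * b * gradSq u)
            * (∫ x, (‖gradient u x‖ ^ 2 * ν x i
                - 2 * (inner ℝ (gradient u x) (ν x) : ℝ) * gradient u x i) ∂σ)
          + (∫ x, V x * u x ^ 2 * ν x i ∂σ)
          - (2 / (p + 1)) * ∫ x, u x ^ (p + 1) * ν x i ∂σ :=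
  statement16_general a b p ε hp1 V hVC1 u hu Ω hΩb σ ν hdiv
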